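/- Let X be a finite set, x ∈ D ⊆ X, and let (D_i, x_i)_{i=1}^n be a sequence enumerating, for each pair (F, x) with x ∈ F ⊆ X, exactly (1 − a_{(D,x)}(F,x)) copies, where a_{(D,x)}(F,y) = −1 if y = x and |F∖D| is even, +1 if y = x and |F∖D| is odd, and 0 otherwise (and the pair appears once if a = 0). Then for every stochastic choice function ρ (with Σ_{y∈F} ρ(F,y) = 1 for all nonempty F), the McFadden–Richter polynomial R((D_i,x_i)_{i=1}^n, ρ) = max_{≻∈ℒ} Σ_i 1{x_i ≻ D_i∖x_i} − Σ_i ρ(D_i, x_i) equals K(ρ, D, x). In particular, K(ρ, D, x) ≥ 0 if and only if R((D_i,x_i)_{i=1}^n, ρ) ≥ 0. -/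

import Mathlib

/-!
Writing the multiplicity as `1 - a`, every stochastic choice function `g` (the deterministic
choice of a ranking included) contributes `(2 ^ |X| - 1) - K(g, D, x)` to the weighted sum,
because the weights `a` pick out exactly the Block–Marschak sum. For a ranking `≻`,
`K(1{· ≻ ·}, D, x)` is the alternating sum of `(-1) ^ |E \ D|` over the interval
`D ⊆ E ⊆ {x} ∪ {z | x ≻ z}`, so it is `1` if `D` is `x` together with everything ranked below
`x`, and `0` otherwise. A ranking and its reverse cannot both have this property once `|X| ≥ 2`,
so the maximum over rankings is `2 ^ |X| - 1` and `R = K(ρ, D, x)`.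
-/

open Finset

variable {α : Type*} [Fintype α] [DecidableEq α]

/-- A strict linear order (ranking) on the finite set `α`. -/
def Ranking (α : Type*) [Fintype α] [DecidableEq α] : Type _ :=
  {r : α → α → Bool //
    (∀ x, ¬ r x x) ∧ (∀ x y z, r x y → r y z → r x z) ∧
    (∀ x y, x ≠ y → r x y ∨ r y x)}

instance : Fintype (Ranking α) := Subtype.fintype _

/-- The Block–Marschak polynomial `K(ρ, D, x) = ∑_{E ⊇ D} (-1)^{|E \ D|} ρ(E, x)`. -/
noncomputable def bmK (ρ : Finset α → α → ℝ) (D : Finset α) (x : α) : ℝ :=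
  ∑ E : Finset α, if D ⊆ E then (-1 : ℝ) ^ (E \ D).card * ρ E x else 0

/-- The coefficient `a_{(D,x)}(F,y)`: supported on pairs `(F, x)` with `F ⊇ D`,
with sign given by the parity of `|F ∖ D|`. -/
noncomputable def mrA (D : Finset α) (x : α) (F : Finset α) (y : α) : ℝ :=
  if y = x ∧ D ⊆ F then (if (F \ D).card % 2 = 0 then 1 else -1) else 0

/-- The multiplicity `1 − a_{(D,x)}(F,y)` of the pair `(F,y)` in the sequence. -/
noncomputable def mrCount (D : Finset α) (x : α) (F : Finset α) (y : α) : ℝ :=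
  1 - mrA D x F y

/-- `1{y ≻ F∖y}` for the ranking `p`. -/
noncomputable def topInd (p : Ranking α) (F : Finset α) (y : α) : ℝ :=
  if ∀ z ∈ F, z ≠ y → p.1 y z then 1 else 0

theorem Finset.sum_Icc_neg_one_pow_card_sdiff {ι R : Type*} [DecidableEq ι] [Ring R]
    (s t : Finset ι) : ∑ u ∈ Icc s t, (-1 : R) ^ #(u \ s) = if s = t then 1 else 0 := by
  by_cases hst : s ⊆ t
  · have hdisj : ∀ u ∈ (t \ s).powerset, Disjoint s u := fun u hu =>
      disjoint_of_subset_right (mem_powerset.mp hu) disjoint_sdiff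
    have hinj : Set.InjOn (s ∪ ·) (t \ s).powerset := fun u hu v hv huv => by
      simpa [union_sdiff_cancel_left (hdisj u hu), union_sdiff_cancel_left (hdisj v hv)]
        using congrArg (· \ s) huv
    have hcancel : ∀ u ∈ (t \ s).powerset, (-1 : R) ^ #((s ∪ u) \ s) = ((-1 : ℤ) ^ #u : ℤ) :=
      fun u hu => by
        rw [union_sdiff_cancel_left (hdisj u hu), Int.cast_pow, Int.cast_neg, Int.cast_one]
    rw [Icc_eq_image_powerset hst, sum_image hinj, sum_congr rfl hcancel, ← Int.cast_sum,
      sum_powerset_neg_one_pow_card, apply_ite Int.cast, Int.cast_one, Int.cast_zero]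
    exact if_congr (sdiff_eq_empty_iff_subset.trans ⟨(subset_antisymm hst ·), (· ▸ subset_rfl)⟩)
      rfl rfl
  · rw [Icc_eq_empty (by simpa using hst), sum_empty,
      if_neg (by rintro rfl; exact hst subset_rfl)]

namespace Ranking

def rev (p : Ranking α) : Ranking α :=
  ⟨fun a b => p.1 b a, p.2.1, fun x y z hxy hyz => p.2.2.1 z y x hyz hxy,
    fun x y hxy => (p.2.2.2 x y hxy).symm⟩

theorem rev_apply (p : Ranking α) (a b : α) : p.rev.1 a b = p.1 b a := rfl

instance : Nonempty (Ranking α) :=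
  ⟨⟨fun a b => Fintype.equivFin α a < Fintype.equivFin α b, by simp,
    fun _ _ _ => by simpa using lt_trans,
    fun a b hab => by simpa using (Fintype.equivFin α).injective.ne hab⟩⟩

def below (p : Ranking α) (y : α) : Finset α := {z | p.1 y z}

theorem mem_below {p : Ranking α} {y z : α} : z ∈ p.below y ↔ p.1 y z := by
  simp [below]

theorem exists_top (p : Ranking α) {F : Finset α} (hF : F.Nonempty) :
    ∃ m ∈ F, ∀ z ∈ F, z ≠ m → p.1 m z := by
  have : IsStrictOrder α (fun a b => p.1 a b) := { irrefl := p.2.1, trans := p.2.2.1 }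
  obtain ⟨m, hm, hmin⟩ :=
    (Finite.wellFounded_of_trans_of_irrefl (fun a b => p.1 a b)).has_min F hF
  exact ⟨m, hm, fun z hz hzm => (p.2.2.2 m z hzm.symm).resolve_right (hmin z hz)⟩

end Ranking

theorem topInd_eq_ite_subset (p : Ranking α) (F : Finset α) (y : α) :
    topInd p F y = if F ⊆ insert y (p.below y) then 1 else 0 := by
  refine if_congr ?_ rfl rfl
  simp only [Ranking.below, subset_iff, mem_insert, mem_filter, mem_univ, true_and]
  exact forall₂_congr fun z _ => by tauto

theorem sum_topInd_eq_one (p : Ranking α) {F : Finset α} (hF : F.Nonempty) :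
    ∑ y ∈ F, topInd p F y = 1 := by
  obtain ⟨m, hm, htop⟩ := p.exists_top hF
  rw [sum_eq_single_of_mem m hm fun y _ hym => ?_, topInd, if_pos htop]
  exact if_neg fun hy => p.2.1 y (p.2.2.1 y m y (hy m hm hym.symm) (htop y ‹_› hym))

theorem bmK_topInd (p : Ranking α) (D : Finset α) (x : α) :
    bmK (topInd p) D x = if D = insert x (p.below x) then 1 else 0 := by
  rw [← sum_Icc_neg_one_pow_card_sdiff, ← Fintype.sum_ite_mem]
  refine sum_congr rfl fun E _ => ?_
  simp only [topInd_eq_ite_subset, mem_Icc]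
  split_ifs <;> simp_all

theorem exists_bmK_topInd_eq_zero [Nontrivial α] (D : Finset α) (x : α) :
    ∃ p : Ranking α, bmK (topInd p) D x = 0 := by
  obtain ⟨r⟩ : Nonempty (Ranking α) := inferInstance
  by_contra! h
  have hD : ∀ p : Ranking α, D = insert x (p.below x) := fun p => by
    by_contra hp
    exact h p (by rw [bmK_topInd, if_neg hp])
  obtain ⟨z, hz⟩ := exists_ne x
  have hr : r.1 x z = true ↔ r.1 z x = true := by
    simpa [Ranking.mem_below, Ranking.rev_apply, hz] using
      Finset.ext_iff.mp ((hD r).symm.trans (hD r.rev)) z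
  rcases r.2.2.2 x z hz.symm with hxz | hzx
  · exact r.2.1 x (r.2.2.1 x z x hxz (hr.mp hxz))
  · exact r.2.1 x (r.2.2.1 x z x (hr.mpr hzx) hzx)

theorem sum_sum_eq_two_pow_card_sub_one {R : Type*} [Ring R] (g : Finset α → α → R)
    (hg : ∀ F : Finset α, F.Nonempty → ∑ y ∈ F, g F y = 1) :
    ∑ F : Finset α, ∑ y ∈ F, g F y = 2 ^ Fintype.card α - 1 := by
  rw [← add_sum_erase _ _ (mem_univ ∅), sum_empty, zero_add,
    sum_congr rfl fun F hF => hg F (nonempty_iff_ne_empty.mpr (ne_of_mem_erase hF)), sum_const,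
    card_erase_of_mem (mem_univ _), card_univ, Fintype.card_finset, nsmul_one,
    Nat.cast_sub Nat.one_le_two_pow, Nat.cast_pow, Nat.cast_ofNat, Nat.cast_one]

theorem sum_sum_mrA_mul {D : Finset α} {x : α} (hx : x ∈ D) (g : Finset α → α → ℝ) :
    ∑ F : Finset α, ∑ y ∈ F, mrA D x F y * g F y = bmK g D x := by
  refine sum_congr rfl fun F _ => ?_
  split_ifs with hDF
  · rw [sum_eq_single_of_mem x (hDF hx) fun y _ hyx => by simp [mrA, hyx], mrA,
      if_pos ⟨rfl, hDF⟩, neg_one_pow_eq_ite]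
    simp [Nat.even_iff]
  · exact sum_eq_zero fun y _ => by simp [mrA, hDF]

theorem sum_sum_mrCount_mul {D : Finset α} {x : α} (hx : x ∈ D) (g : Finset α → α → ℝ)
    (hg : ∀ F : Finset α, F.Nonempty → ∑ y ∈ F, g F y = 1) :
    ∑ F : Finset α, ∑ y ∈ F, mrCount D x F y * g F y = 2 ^ Fintype.card α - 1 - bmK g D x := by
  simp only [mrCount, sub_mul, one_mul, sum_sub_distrib]
  rw [sum_sum_eq_two_pow_card_sub_one g hg, sum_sum_mrA_mul hx]

theorem iSup_sum_sum_mrCount_mul_topInd [Nontrivial α] {D : Finset α} {x : α} (hx : x ∈ D) :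
    ⨆ p : Ranking α, ∑ F : Finset α, ∑ y ∈ F, mrCount D x F y * topInd p F y
      = 2 ^ Fintype.card α - 1 := by
  simp only [sum_sum_mrCount_mul hx _ fun _ => sum_topInd_eq_one _]
  obtain ⟨p₀, hp₀⟩ := exists_bmK_topInd_eq_zero D x
  refine le_antisymm (ciSup_le fun p => ?_)
    (le_ciSup_of_le (Set.finite_range _).bddAbove p₀ ?_)
  · rw [bmK_topInd]
    split_ifs <;> norm_num
  · rw [hp₀, sub_zero]

theorem stmt_14_general (hcard : 2 ≤ Fintype.card α)
    (D : Finset α) (x : α) (hx : x ∈ D)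
    (ρ : Finset α → α → ℝ)
    (hρ1 : ∀ F : Finset α, F.Nonempty → ∑ y ∈ F, ρ F y = 1)
    (R : ℝ)
    (hR : R = (⨆ p : Ranking α, ∑ F : Finset α, ∑ y ∈ F, mrCount D x F y * topInd p F y)
      - ∑ F : Finset α, ∑ y ∈ F, mrCount D x F y * ρ F y) :
    R = bmK ρ D x ∧ (0 ≤ bmK ρ D x ↔ 0 ≤ R) := by
  have : Nontrivial α := Fintype.one_lt_card_iff_nontrivial.mp hcard
  have hRK : R = bmK ρ D x := by
    rw [hR, iSup_sum_sum_mrCount_mul_topInd hx, sum_sum_mrCount_mul hx ρ hρ1]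
    ring
  exact ⟨hRK, by rw [hRK]⟩

/-- The McFadden–Richter polynomial of the sequence listing each pair `(F,y)`
(`y ∈ F`) with multiplicity `1 − a_{(D,x)}(F,y)` equals the Block–Marschak
polynomial `K(ρ, D, x)`; in particular `K ≥ 0` iff `R ≥ 0`. -/
theorem stmt_14 [Nonempty (Ranking α)] (hcard : 2 ≤ Fintype.card α)
    (D : Finset α) (x : α) (hx : x ∈ D)
    (ρ : Finset α → α → ℝ)
    (hρ1 : ∀ F : Finset α, F.Nonempty → ∑ y ∈ F, ρ F y = 1)
    (R : ℝ)
    (hR : R = (⨆ p : Ranking α, ∑ F : Finset α, ∑ y ∈ F, mrCount D x F y * topInd p F y)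
      - ∑ F : Finset α, ∑ y ∈ F, mrCount D x F y * ρ F y) :
    R = bmK ρ D x ∧ (0 ≤ bmK ρ D x ↔ 0 ≤ R) :=
  stmt_14_general hcard D x hx ρ hρ1 R hR
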